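/- arXiv:2407.02308 — 3 statements merged into one kernel-verified Lean document; each statement's English description precedes it below -/
import Mathlib

section
/- Let I be a finite nonempty set of options, v : I → ℝ (the simulated utilities V_i + ξ_i), and γ : I → {0,1} an availability vector. Set M = max_{i∈I} v_i and define the penalized utilities u_i = v_i − M·(1 − γ_i). If there exists an offered option j (γ_j = 1) with v_j > 0, then max_{i∈I} u_i = max_{i : γ_i = 1} v_i, and every i attaining max_{i∈I} u_i satisfies γ_i = 1. -/
/-- Penalizing non-offered options by the big-M constant `M = max v` restricts
utility maximization to offered options, provided some offered option has
strictly positive simulated utility. -/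
theorem bigM_penalization_restricts_to_offered
    {I : Type*} [Fintype I] [Nonempty I]
    (v γ : I → ℝ) (hγ01 : ∀ i, γ i = 0 ∨ γ i = 1)
    (M : ℝ) (hM : M = ⨆ i, v i)
    (u : I → ℝ) (hu : ∀ i, u i = v i - M * (1 - γ i))
    (hoff : ∃ j, γ j = 1 ∧ v j > 0) :
    (⨆ i, u i) =
      (Finset.univ.filter (fun i => γ i = 1)).sup'
        (by
          obtain ⟨j, hj, _⟩ := hoff
          exact ⟨j, Finset.mem_filter.mpr ⟨Finset.mem_univ j, hj⟩⟩) v ∧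
    ∀ i, u i = (⨆ j, u j) → γ i = 1 := by
  obtain ⟨j, hj1, hjpos⟩ := hoff
  have hS : ((Finset.univ.filter (fun i => γ i = 1)) : Finset I).Nonempty :=
    ⟨j, Finset.mem_filter.mpr ⟨Finset.mem_univ j, hj1⟩⟩
  set m := (Finset.univ.filter (fun i => γ i = 1)).sup' hS v with hm
  have hMsup : M = Finset.univ.sup' Finset.univ_nonempty v := by
    rw [hM, Finset.sup'_univ_eq_ciSup]
  have hvM : ∀ i, v i ≤ M := fun i => hMsup ▸ Finset.le_sup' v (Finset.mem_univ i)
  -- offered options have u i = v i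
  have huoff : ∀ i, γ i = 1 → u i = v i := by
    intro i hi; rw [hu i, hi]; ring
  -- non-offered options have u i ≤ 0
  have hun : ∀ i, γ i = 0 → u i ≤ 0 := by
    intro i hi; rw [hu i, hi]
    have := hvM i; linarith
  have hmpos : 0 < m := lt_of_lt_of_le hjpos (Finset.le_sup' v (Finset.mem_filter.mpr ⟨Finset.mem_univ j, hj1⟩))
  have hle : ∀ i, u i ≤ m := by
    intro i
    rcases hγ01 i with hi | hi
    · exact le_of_lt (lt_of_le_of_lt (hun i hi) hmpos)
    · rw [huoff i hi]
      exact Finset.le_sup' v (Finset.mem_filter.mpr ⟨Finset.mem_univ i, hi⟩)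
  have hsup : (⨆ i, u i) = m := by
    rw [← Finset.sup'_univ_eq_ciSup]
    apply le_antisymm
    · exact Finset.sup'_le _ _ fun i _ => hle i
    · obtain ⟨k, hk, hkeq⟩ := Finset.exists_mem_eq_sup' hS v
      have hk1 : γ k = 1 := (Finset.mem_filter.mp hk).2
      rw [hm, hkeq, ← huoff k hk1]
      exact Finset.le_sup' u (Finset.mem_univ k)
  refine ⟨hsup, fun i hi => ?_⟩
  rcases hγ01 i with h0 | h1
  · exfalso
    have : u i ≤ 0 := hun i h0
    rw [hi, hsup] at this
    linarith
  · exact h1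
end

section
/- Let I be a finite nonempty index set, V : I → ℝ, and let (ξ_i)_{i∈I} be independent real random variables, each with cumulative distribution function F(x) = exp(−e^{−x}) (standard Gumbel, location 0 and scale 1). Then for every i ∈ I, the probability that V_i + ξ_i ≥ V_j + ξ_j for all j ∈ I equals e^{V_i} / ∑_{j∈I} e^{V_j}. -/
/-!
Condition on `ξ i = x`. By independence the other options all lie below it with probability
`∏_{j ≠ i} F (x + V i - V j) = exp (-A e^{-x})`, where `A = ∑_{j ≠ i} e^{V j - V i}`: shifted Gumbel
CDFs multiply to a shifted Gumbel CDF. Against the Gumbel density `e^{-x} exp (-e^{-x})` this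
integrates to `∫ e^{-x} exp (-(1 + A) e^{-x}) dx = (1 + A)⁻¹`, the softmax weight of `i`.
-/

open MeasureTheory ProbabilityTheory Real Set Filter Topology

theorem integrable_of_hasDerivAt_of_nonneg {g g' : ℝ → ℝ} {l r : ℝ}
    (hderiv : ∀ x, HasDerivAt g (g' x) x) (hg' : ∀ x, 0 ≤ g' x)
    (hbot : Tendsto g atBot (𝓝 l)) (htop : Tendsto g atTop (𝓝 r)) : Integrable g' := by
  have hint : ∀ a b, IntervalIntegrable g' volume a b := fun a b =>
    intervalIntegral.intervalIntegrable_deriv_of_nonneg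
      (fun x _ => (hderiv x).continuousAt.continuousWithinAt)
      (fun x _ => hderiv x) (fun x _ => hg' x)
  refine integrable_of_intervalIntegral_norm_tendsto (r - l)
    (fun t => (hint (-t) t).def'.mono_set Ioc_subset_uIoc) tendsto_neg_atTop_atBot
    tendsto_id ?_
  have hftc : ∀ t, ∫ x in -t..t, ‖g' x‖ = g t - g (-t) := fun t => by
    simp_rw [Real.norm_of_nonneg (hg' _)]
    exact intervalIntegral.integral_eq_sub_of_hasDerivAt (fun x _ => hderiv x) (hint _ _)
  simp_rw [hftc]
  exact htop.sub (hbot.comp tendsto_neg_atTop_atBot)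

theorem lintegral_ofReal_of_hasDerivAt_of_nonneg {g g' : ℝ → ℝ} {l r : ℝ}
    (hderiv : ∀ x, HasDerivAt g (g' x) x) (hg' : ∀ x, 0 ≤ g' x)
    (hbot : Tendsto g atBot (𝓝 l)) (htop : Tendsto g atTop (𝓝 r)) :
    ∫⁻ x, ENNReal.ofReal (g' x) = ENNReal.ofReal (r - l) := by
  have hint := integrable_of_hasDerivAt_of_nonneg hderiv hg' hbot htop
  rw [← ofReal_integral_eq_lintegral_ofReal hint (.of_forall hg'),
    integral_of_hasDerivAt_of_tendsto hderiv hint hbot htop]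

theorem setLIntegral_Iic_ofReal_of_hasDerivAt_of_nonneg {g g' : ℝ → ℝ} {l r : ℝ}
    (hderiv : ∀ x, HasDerivAt g (g' x) x) (hg' : ∀ x, 0 ≤ g' x)
    (hbot : Tendsto g atBot (𝓝 l)) (htop : Tendsto g atTop (𝓝 r)) (a : ℝ) :
    ∫⁻ x in Iic a, ENNReal.ofReal (g' x) = ENNReal.ofReal (g a - l) := by
  have hint := (integrable_of_hasDerivAt_of_nonneg hderiv hg' hbot htop).integrableOn (s := Iic a)
  rw [← ofReal_integral_eq_lintegral_ofReal hint (.of_forall hg'),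
    integral_Iic_of_hasDerivAt_of_tendsto' (fun x _ => hderiv x) hint hbot]

theorem hasDerivAt_inv_mul_exp_neg_mul_exp_neg (B : ℝ) (hB : B ≠ 0) (x : ℝ) :
    HasDerivAt (fun x => B⁻¹ * exp (-(B * exp (-x))))
      (exp (-x) * exp (-(B * exp (-x)))) x := by
  refine (((hasDerivAt_neg x).exp.const_mul B).neg.exp.const_mul B⁻¹).congr_deriv ?_
  simp only [Pi.neg_apply]
  field_simp

theorem tendsto_inv_mul_exp_neg_mul_exp_neg_atBot {B : ℝ} (hB : 0 < B) :
    Tendsto (fun x => B⁻¹ * exp (-(B * exp (-x)))) atBot (𝓝 0) := by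
  have h : Tendsto (fun x => -(B * exp (-x))) atBot atBot :=
    tendsto_neg_atTop_atBot.comp
      ((tendsto_exp_atTop.comp tendsto_neg_atBot_atTop).const_mul_atTop hB)
  simpa using (tendsto_exp_atBot.comp h).const_mul B⁻¹

theorem tendsto_inv_mul_exp_neg_mul_exp_neg_atTop (B : ℝ) :
    Tendsto (fun x => B⁻¹ * exp (-(B * exp (-x)))) atTop (𝓝 B⁻¹) := by
  have h : Tendsto (fun x => -(B * exp (-x))) atTop (𝓝 0) := by
    simpa using (tendsto_exp_neg_atTop_nhds_zero.const_mul B).neg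
  simpa using ((continuous_exp.tendsto 0).comp h).const_mul B⁻¹

theorem lintegral_exp_neg_mul_exp_neg_mul_exp_neg {B : ℝ} (hB : 0 < B) :
    ∫⁻ x, ENNReal.ofReal (exp (-x) * exp (-(B * exp (-x)))) = ENNReal.ofReal B⁻¹ := by
  simpa using lintegral_ofReal_of_hasDerivAt_of_nonneg
    (hasDerivAt_inv_mul_exp_neg_mul_exp_neg B hB.ne') (fun x => by positivity)
    (tendsto_inv_mul_exp_neg_mul_exp_neg_atBot hB) (tendsto_inv_mul_exp_neg_mul_exp_neg_atTop B)

noncomputable def gumbelMeasure : Measure ℝ :=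
  volume.withDensity fun x => ENNReal.ofReal (exp (-x) * exp (-exp (-x)))

theorem gumbelMeasure_Iic (a : ℝ) :
    gumbelMeasure (Iic a) = ENNReal.ofReal (exp (-exp (-a))) := by
  have h := setLIntegral_Iic_ofReal_of_hasDerivAt_of_nonneg
    (hasDerivAt_inv_mul_exp_neg_mul_exp_neg 1 one_ne_zero) (fun x => by positivity)
    (tendsto_inv_mul_exp_neg_mul_exp_neg_atBot one_pos)
    (tendsto_inv_mul_exp_neg_mul_exp_neg_atTop 1) a
  simp only [one_mul, inv_one, sub_zero] at h
  rw [gumbelMeasure, withDensity_apply _ measurableSet_Iic, h]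

instance : IsProbabilityMeasure gumbelMeasure where
  measure_univ := by
    simpa [gumbelMeasure] using lintegral_exp_neg_mul_exp_neg_mul_exp_neg one_pos

theorem lintegral_exp_neg_mul_exp_neg_gumbelMeasure {A : ℝ} (hA : 0 ≤ A) :
    ∫⁻ x, ENNReal.ofReal (exp (-(A * exp (-x)))) ∂gumbelMeasure = ENNReal.ofReal (1 + A)⁻¹ := by
  rw [gumbelMeasure, lintegral_withDensity_eq_lintegral_mul _ (by fun_prop) (by fun_prop),
    ← lintegral_exp_neg_mul_exp_neg_mul_exp_neg (by positivity : 0 < 1 + A)]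
  refine lintegral_congr fun x => ?_
  rw [Pi.mul_apply, ← ENNReal.ofReal_mul (by positivity), mul_assoc, ← exp_add]
  ring_nf

theorem map_eq_gumbelMeasure {Ω : Type*} [MeasurableSpace Ω] {μ : Measure Ω} [IsFiniteMeasure μ]
    {X : Ω → ℝ} (hX : Measurable X)
    (hcdf : ∀ x, μ {ω | X ω ≤ x} = ENNReal.ofReal (exp (-exp (-x)))) :
    μ.map X = gumbelMeasure :=
  Measure.ext_of_Iic _ _ fun a => by
    rw [Measure.map_apply hX measurableSet_Iic, gumbelMeasure_Iic]
    exact hcdf a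

theorem measurableSet_setOf_forall_ne_le {ι : Type*} [Countable ι] (i : ι) (c : ι → ℝ) :
    MeasurableSet {f : ι → ℝ | ∀ j ≠ i, f j ≤ f i + c j} := by
  simp only [ofPred_forall]
  exact .iInter fun j => .iInter fun _ => measurableSet_le (by fun_prop) (by fun_prop)

theorem measure_pi_setOf_forall_ne_le {ι : Type*} [Fintype ι] [DecidableEq ι]
    (μ : ι → Measure ℝ) [∀ j, SigmaFinite (μ j)] (i : ι) (c : ι → ℝ) :
    Measure.pi μ {f | ∀ j ≠ i, f j ≤ f i + c j} =
      ∫⁻ x, ∏ j ∈ Finset.univ.erase i, μ j (Iic (x + c j)) ∂μ i := by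
  have hsplit := measurePreserving_piEquivPiSubtypeProd μ (· = i)
  set e := MeasurableEquiv.piEquivPiSubtypeProd (fun _ : ι => ℝ) (· = i)
  have hslice : ∀ x : {j // j = i} → ℝ,
      Prod.mk x ⁻¹' (e.symm ⁻¹' {f | ∀ j ≠ i, f j ≤ f i + c j}) =
        Set.pi univ fun j : {j // j ≠ i} => Iic (x ⟨i, rfl⟩ + c j) := by
    intro x
    ext g
    have happ : ∀ j, e.symm (x, g) j = if h : j = i then x ⟨j, h⟩ else g ⟨j, h⟩ := fun _ => rfl
    simp +contextual [happ, Pi.le_def]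
  rw [← (MeasurePreserving.symm e hsplit).measure_preimage_equiv,
    Measure.prod_apply ((measurableSet_setOf_forall_ne_le i c).preimage e.symm.measurable)]
  simp only [hslice, Measure.pi_pi]
  refine Eq.trans ?_ ((measurePreserving_piUnique fun j : {j // j = i} => μ j).lintegral_comp_emb
    (MeasurableEquiv.piUnique _).measurableEmbedding
    fun x => ∏ j ∈ Finset.univ.erase i, μ j (Iic (x + c j)))
  congr 1 with x
  -- the two measures differ only in the `Fintype` instance on `{j // j = i}`
  · congr!
  exact (Finset.prod_subtype _ (by simp) fun j => μ j (Iic (x ⟨i, rfl⟩ + c j))).symm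

theorem prod_ofReal_exp_neg_exp_neg_add {ι : Type*} (s : Finset ι) (c : ι → ℝ) (x : ℝ) :
    ∏ j ∈ s, ENNReal.ofReal (exp (-exp (-(x + c j)))) =
      ENNReal.ofReal (exp (-((∑ j ∈ s, exp (-c j)) * exp (-x)))) := by
  rw [← ENNReal.ofReal_prod_of_nonneg fun j _ => (exp_pos _).le, ← exp_sum,
    Finset.sum_mul, ← Finset.sum_neg_distrib]
  refine congrArg (ENNReal.ofReal ∘ exp) (Finset.sum_congr rfl fun j _ => ?_)
  rw [← exp_add]
  ring_nf

theorem exp_div_sum_exp_eq_inv_one_add {ι : Type*} [Fintype ι] [DecidableEq ι]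
    (V : ι → ℝ) (i : ι) :
    exp (V i) / ∑ j, exp (V j) = (1 + ∑ j ∈ Finset.univ.erase i, exp (-(V i - V j)))⁻¹ := by
  have hsum : ∑ j, exp (V j) =
      exp (V i) * (1 + ∑ j ∈ Finset.univ.erase i, exp (-(V i - V j))) := by
    rw [← Finset.add_sum_erase _ _ (Finset.mem_univ i), mul_add, mul_one, Finset.mul_sum]
    refine congrArg (_ + ·) (Finset.sum_congr rfl fun j _ => ?_)
    rw [← exp_add]
    ring_nf
  rw [hsum, div_mul_eq_div_div, div_self (exp_pos _).ne', one_div]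

theorem gumbel_argmax_prob_eq_softmax_general
    {I : Type*} [Fintype I]
    {Ω : Type*} [MeasurableSpace Ω] (μ : Measure Ω) [IsProbabilityMeasure μ]
    (V : I → ℝ) (ξ : I → Ω → ℝ)
    (hmeas : ∀ i, Measurable (ξ i))
    (hindep : iIndepFun ξ μ)
    (hcdf : ∀ i x, μ {ω | ξ i ω ≤ x} = ENNReal.ofReal (Real.exp (-Real.exp (-x)))) :
    ∀ i, μ {ω | ∀ j, V j + ξ j ω ≤ V i + ξ i ω} =
      ENNReal.ofReal (Real.exp (V i) / ∑ j, Real.exp (V j)) := by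
  classical
  intro i
  have hlaw : μ.map (fun ω j => ξ j ω) = Measure.pi fun _ => gumbelMeasure := by
    rw [hindep.map_fun_eq_pi_map fun j => (hmeas j).aemeasurable]
    exact congrArg Measure.pi (funext fun j => map_eq_gumbelMeasure (hmeas j) (hcdf j))
  have hevent : {ω | ∀ j, V j + ξ j ω ≤ V i + ξ i ω} =
      (fun ω j => ξ j ω) ⁻¹' {f | ∀ j ≠ i, f j ≤ f i + (V i - V j)} := by
    ext ω
    refine forall_congr' fun j => ⟨fun h _ => by linarith, fun h => ?_⟩
    rcases eq_or_ne j i with rfl | hj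
    · exact le_rfl
    · linarith [h hj]
  rw [hevent, ← Measure.map_apply (measurable_pi_lambda _ hmeas)
    (measurableSet_setOf_forall_ne_le i _), hlaw, measure_pi_setOf_forall_ne_le]
  simp only [gumbelMeasure_Iic, prod_ofReal_exp_neg_exp_neg_add]
  rw [lintegral_exp_neg_mul_exp_neg_gumbelMeasure (by positivity), exp_div_sum_exp_eq_inv_one_add]

/-- Multinomial logit choice probabilities: if the error terms `ξ i` are
independent standard Gumbel (CDF `exp (-exp (-x))`), then the probability that
option `i` maximizes the utility `V j + ξ j` equals the softmax
`exp (V i) / ∑ j, exp (V j)`. -/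
theorem gumbel_argmax_prob_eq_softmax
    {I : Type*} [Fintype I] [Nonempty I]
    {Ω : Type*} [MeasurableSpace Ω] (μ : Measure Ω) [IsProbabilityMeasure μ]
    (V : I → ℝ) (ξ : I → Ω → ℝ)
    (hmeas : ∀ i, Measurable (ξ i))
    (hindep : iIndepFun ξ μ)
    (hcdf : ∀ i x, μ {ω | ξ i ω ≤ x} = ENNReal.ofReal (Real.exp (-Real.exp (-x)))) :
    ∀ i, μ {ω | ∀ j, V j + ξ j ω ≤ V i + ξ i ω} =
      ENNReal.ofReal (Real.exp (V i) / ∑ j, Real.exp (V j)) :=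
  gumbel_argmax_prob_eq_softmax_general μ V ξ hmeas hindep hcdf
end

section
/- Let C be a finite set, O ∉ C, and V = C ∪ {O}. Let x : V × V → {0,1} with x(n,n) = 0 for all n, and suppose: (i) ∑_{m∈V} x(m,n) ≤ 1 for every n ∈ C; (ii) ∑_{m∈V} x(m,n) = ∑_{m∈V} x(n,m) for every n ∈ V; (iii) ∑_{n∈C} x(O,n) = 1; (iv) the arc set restricted to customers, {(m,n) ∈ C × C : x(m,n) = 1}, contains no directed cycle. Then the full arc set {(m,n) ∈ V × V : x(m,n) = 1} is exactly a single directed cycle through the depot: there exist p ≥ 1 and pairwise distinct customers c_1, …, c_p ∈ C such that the arcs with x = 1 are precisely (O, c_1), (c_1, c_2), …, (c_{p−1}, c_p), (c_p, O). -/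
private lemma sum01_unique {ι : Type*} [Fintype ι] (f : ι → ℝ)
    (h01 : ∀ i, f i = 0 ∨ f i = 1) (hle : ∑ i, f i ≤ 1)
    {a b : ι} (ha : f a = 1) (hb : f b = 1) : a = b := by
  classical
  by_contra hne
  have h2 : ∑ i ∈ ({a, b} : Finset ι), f i = 2 := by
    rw [Finset.sum_pair hne, ha, hb]; norm_num
  have hmono : ∑ i ∈ ({a, b} : Finset ι), f i ≤ ∑ i, f i :=
    Finset.sum_le_sum_of_subset_of_nonneg (Finset.subset_univ ({a, b} : Finset ι))
      (fun i _ _ => by rcases h01 i with h | h <;> rw [h] <;> norm_num)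
  rw [h2] at hmono
  linarith

private lemma sum01_exists {ι : Type*} [Fintype ι] (f : ι → ℝ)
    (hne : ∑ i, f i ≠ 0) : ∃ a, f a ≠ 0 := by
  by_contra h
  push_neg at h
  exact hne (Finset.sum_eq_zero fun i _ => h i)

/-- Under the routing constraints (each customer entered at most once, flow
conservation at every node, the vehicle leaves the depot exactly once toward a
customer, and no directed cycle among customers), the arcs with `x = 1` form
exactly one directed cycle through the depot: `(O, c 0), (c 0, c 1), …,
(c (p-1), O)` for some `p ≥ 1` and pairwise distinct customers
`c 0, …, c (p-1)`. Nodes are `Option C`, with `none` the depot `O`. -/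
theorem route_arcs_form_single_depot_cycle
    {C : Type*} [Fintype C]
    (x : Option C → Option C → ℝ)
    (hx01 : ∀ m n, x m n = 0 ∨ x m n = 1)
    (hdiag : ∀ n, x n n = 0)
    (henter : ∀ n : C, ∑ m : Option C, x m (some n) ≤ 1)
    (hflow : ∀ n : Option C, ∑ m : Option C, x m n = ∑ m : Option C, x n m)
    (hdepot : ∑ n : C, x none (some n) = 1)
    (hnocycle : ¬ ∃ (k : ℕ) (c : ℕ → C), 1 ≤ k ∧ c k = c 0 ∧
        ∀ j < k, x (some (c j)) (some (c (j + 1))) = 1) :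
    ∃ (p : ℕ) (c : ℕ → C), 1 ≤ p ∧
      (∀ i < p, ∀ j < p, c i = c j → i = j) ∧
      ∀ m n : Option C, x m n = 1 ↔
        ((m = none ∧ n = some (c 0)) ∨
         (∃ j, j + 1 < p ∧ m = some (c j) ∧ n = some (c (j + 1))) ∨
         (m = some (c (p - 1)) ∧ n = none)) := by
  classical
  have hnn : ∀ m n, (0:ℝ) ≤ x m n := fun m n => by
    rcases hx01 m n with h | h <;> rw [h] <;> norm_num
  obtain ⟨c0, hc0⟩ : ∃ a : C, x none (some a) = 1 := by
    obtain ⟨a, ha⟩ := sum01_exists (fun a : C => x none (some a)) (by rw [hdepot]; norm_num)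
    exact ⟨a, (hx01 none (some a)).resolve_left ha⟩
  have hout_none : ∑ n : Option C, x none n = 1 := by
    rw [Fintype.sum_option, hdiag, hdepot]; ring
  have hin_none : ∑ m : Option C, x m none = 1 := by rw [hflow none, hout_none]
  have U2 : ∀ m m' : Option C, x m none = 1 → x m' none = 1 → m = m' :=
    fun m m' h h' => sum01_unique (fun k => x k none) (fun k => hx01 k none)
      (le_of_eq hin_none) h h'
  have U1 : ∀ (a : C) (m m' : Option C), x m (some a) = 1 → x m' (some a) = 1 → m = m' :=
    fun a m m' h h' => sum01_unique (fun k => x k (some a)) (fun k => hx01 k (some a))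
      (henter a) h h'
  have hsucc' : ∀ m : Option C, ∃ n : Option C, (∃ k, x m k = 1) → x m n = 1 := by
    intro m
    by_cases h : ∃ k, x m k = 1
    · obtain ⟨n, hn⟩ := h
      exact ⟨n, fun _ => hn⟩
    · exact ⟨none, fun hk => absurd hk h⟩
  choose succ hsucc using hsucc'
  have hact_none : ∃ n, x none n = 1 := ⟨some c0, hc0⟩
  have hact_of_in : ∀ m n, x m n = 1 → ∃ n', x n n' = 1 := by
    intro m n h
    cases n with
    | none => exact hact_none
    | some a =>
      have h1 : x m (some a) ≤ ∑ m', x m' (some a) :=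
        Finset.single_le_sum (f := fun m' => x m' (some a))
          (fun i _ => hnn i (some a)) (Finset.mem_univ m)
      rw [h] at h1
      have hpos : ∑ n', x (some a) n' ≠ 0 := by rw [← hflow (some a)]; linarith
      obtain ⟨n', hn'⟩ := sum01_exists _ hpos
      exact ⟨n', (hx01 _ _).resolve_left hn'⟩
  -- the walk from the depot
  set g : ℕ → Option C := fun k => succ^[k] none with hg_def
  have hg0 : g 0 = none := rfl
  have hgS : ∀ k, g (k+1) = succ (g k) := fun k => Function.iterate_succ_apply' succ k none
  have hg_arc : ∀ k, x (g k) (g (k+1)) = 1 := by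
    intro k
    induction k with
    | zero => rw [hgS 0, hg0]; exact hsucc none hact_none
    | succ n ih => rw [hgS (n+1)]; exact hsucc _ (hact_of_in _ _ ih)
  -- an infinite walk through customers only is impossible
  have helper : ∀ h : ℕ → Option C, (∀ t, x (h t) (h (t+1)) = 1) →
      (∀ t, h t ≠ none) → False := by
    intro h harc hne
    have hsk : ∀ t, ∃ a : C, h t = some a := by
      intro t
      cases ht : h t with
      | none => exact absurd ht (hne t)
      | some a => exact ⟨a, rfl⟩
    choose d hd using hsk
    have key : ∀ i j : ℕ, i < j → d i = d j → False := by
      intro i j hlt hdij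
      refine hnocycle ⟨j - i, fun t => d (i + t), by omega, ?_, ?_⟩
      · have h1 : i + (j - i) = j := by omega
        simp only [h1, Nat.add_zero]
        exact hdij.symm
      · intro t ht
        show x (some (d (i + t))) (some (d (i + (t + 1)))) = 1
        have h1 := harc (i + t)
        rw [hd (i + t), hd (i + t + 1)] at h1
        have h2 : i + (t + 1) = i + t + 1 := by ring
        rw [h2]
        exact h1
    obtain ⟨i, j, hij, hdij⟩ := Finite.exists_ne_map_eq_of_infinite d
    rcases hij.lt_or_gt with hlt | hlt
    · exact key i j hlt hdij
    · exact key j i hlt hdij.symm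
  -- first return to the depot
  have hpex : ∃ k, 1 ≤ k ∧ g k = none := by
    by_contra hcon
    push_neg at hcon
    exact helper (fun t => g (t + 1)) (fun t => hg_arc (t + 1))
      (fun t => hcon (t + 1) (by omega))
  set p := Nat.find hpex with hp_def
  obtain ⟨hp1, hgp⟩ : 1 ≤ p ∧ g p = none := Nat.find_spec hpex
  have hp_min : ∀ k, 1 ≤ k → k < p → g k ≠ none := by
    intro k h1 hk hc
    exact Nat.find_min hpex hk ⟨h1, hc⟩
  have hg1 : g 1 ≠ none := by
    intro h
    have h1 := hg_arc 0
    rw [hg0, h, hdiag] at h1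
    norm_num at h1
  have hp2 : 2 ≤ p := by
    by_contra h
    push_neg at h
    have hp1' : p = 1 := by omega
    exact hg1 (hp1' ▸ hgp)
  set c : ℕ → C := fun j => (g (j + 1)).getD c0 with hc_def
  have F : ∀ k, 1 ≤ k → k < p → g k = some (c (k - 1)) := by
    intro k h1 hk
    cases hgk : g k with
    | none => exact absurd hgk (hp_min k h1 hk)
    | some a =>
      have h2 : k - 1 + 1 = k := by omega
      simp only [hc_def, h2, hgk, Option.getD_some]
  have hdist : ∀ i < p - 1, ∀ j < p - 1, c i = c j → i = j := by
    have key : ∀ i j, i < j → j < p - 1 → c i = c j → False := by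
      intro i j hij hj hcij
      refine hnocycle ⟨j - i, fun t => c (i + t), by omega, ?_, ?_⟩
      · have h1 : i + (j - i) = j := by omega
        simp only [h1, Nat.add_zero]
        exact hcij.symm
      · intro t ht
        have h1 : g (i + t + 1) = some (c (i + t)) := by
          have hF := F (i + t + 1) (by omega) (by omega)
          have he : i + t + 1 - 1 = i + t := by omega
          rw [he] at hF
          exact hF
        have h2 : g (i + t + 2) = some (c (i + (t + 1))) := by
          have hF := F (i + t + 2) (by omega) (by omega)
          have he : i + t + 2 - 1 = i + (t + 1) := by omega
          rw [he] at hF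
          exact hF
        have h3 := hg_arc (i + t + 1)
        rw [h1] at h3
        have he2 : i + t + 1 + 1 = i + t + 2 := by ring
        rw [he2, h2] at h3
        exact h3
    intro i hi j hj hcij
    rcases Nat.lt_trichotomy i j with h | h | h
    · exact (key i j h hj hcij).elim
    · exact h
    · exact (key j i h hi hcij.symm).elim
  -- every customer receiving an arc is on the path
  have honpath : ∀ (m : Option C) (a : C), x m (some a) = 1 → ∃ j, j < p - 1 ∧ a = c j := by
    intro m a hma
    by_contra hcon
    push_neg at hcon
    set h : ℕ → Option C := fun t => succ^[t] (some a) with hh_def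
    have hh0 : h 0 = some a := rfl
    have hhS : ∀ t, h (t + 1) = succ (h t) := fun t => Function.iterate_succ_apply' _ _ _
    have hh_arc : ∀ t, x (h t) (h (t + 1)) = 1 := by
      intro t
      induction t with
      | zero => rw [hhS 0, hh0]; exact hsucc _ (hact_of_in m (some a) hma)
      | succ n ih => rw [hhS (n + 1)]; exact hsucc _ (hact_of_in _ _ ih)
    by_cases hall : ∃ t, h t = none
    · have ht_spec : h (Nat.find hall) = none := Nat.find_spec hall
      set t := Nat.find hall with ht_def
      have ht_min : ∀ s, s < t → h s ≠ none := fun s hs => Nat.find_min hall hs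
      have ht1 : 1 ≤ t := by
        rcases Nat.eq_zero_or_pos t with h0 | h0
        · rw [h0, hh0] at ht_spec
          exact absurd ht_spec (by simp)
        · exact h0
      have back : ∀ s, s < t → s < p → h (t - 1 - s) = g (p - 1 - s) := by
        intro s
        induction s with
        | zero =>
          intro _ _
          have harc := hh_arc (t - 1)
          have he : t - 1 + 1 = t := by omega
          rw [he, ht_spec] at harc
          have hglast := hg_arc (p - 1)
          have he2 : p - 1 + 1 = p := by omega
          rw [he2, hgp] at hglast
          simpa using U2 _ _ harc hglast
        | succ s ih =>
          intro hst hsp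
          have hprev := ih (by omega) (by omega)
          have hgc : g (p - 1 - s) = some (c (p - 1 - s - 1)) := F _ (by omega) (by omega)
          have harc1 := hh_arc (t - 1 - (s + 1))
          have he : t - 1 - (s + 1) + 1 = t - 1 - s := by omega
          rw [he, hprev, hgc] at harc1
          have harc2 := hg_arc (p - 1 - (s + 1))
          have he2 : p - 1 - (s + 1) + 1 = p - 1 - s := by omega
          rw [he2, hgc] at harc2
          exact U1 _ _ _ harc1 harc2
      rcases Nat.lt_or_ge t p with htp | htp
      · have hb := back (t - 1) (by omega) (by omega)
        have he : t - 1 - (t - 1) = 0 := by omega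
        have he2 : p - 1 - (t - 1) = p - t := by omega
        rw [he, he2, hh0] at hb
        have hgc := F (p - t) (by omega) (by omega)
        rw [hgc] at hb
        exact hcon (p - t - 1) (by omega) (Option.some.inj hb)
      · have hb := back (p - 1) (by omega) (by omega)
        have he : p - 1 - (p - 1) = 0 := by omega
        have he2 : t - 1 - (p - 1) = t - p := by omega
        rw [he, he2, hg0] at hb
        exact ht_min (t - p) (by omega) hb
    · push_neg at hall
      exact helper h hh_arc hall
  -- assemble the result
  refine ⟨p - 1, c, by omega, hdist, ?_⟩
  intro m n
  constructor
  · intro hmn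
    cases n with
    | none =>
      have hglast := hg_arc (p - 1)
      have he2 : p - 1 + 1 = p := by omega
      rw [he2, hgp] at hglast
      have hm := U2 m (g (p - 1)) hmn hglast
      have hF := F (p - 1) (by omega) (by omega)
      exact Or.inr (Or.inr ⟨by rw [hm, hF], rfl⟩)
    | some a =>
      obtain ⟨j, hj, haj⟩ := honpath m a hmn
      have hgj1 : g (j + 1) = some (c j) := by
        have hF := F (j + 1) (by omega) (by omega)
        have he : j + 1 - 1 = j := by omega
        rw [he] at hF
        exact hF
      have harcj := hg_arc j
      rw [hgj1] at harcj
      have hm : m = g j := U1 (c j) m (g j) (by rw [← haj] at harcj ⊢; exact hmn) harcj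
      cases j with
      | zero => exact Or.inl ⟨by rw [hm, hg0], by rw [haj]⟩
      | succ jj =>
        have hF := F (jj + 1) (by omega) (by omega)
        have he : jj + 1 - 1 = jj := by omega
        rw [he] at hF
        exact Or.inr (Or.inl ⟨jj, by omega, by rw [hm, hF], by rw [haj]⟩)
  · rintro (⟨hm, hn⟩ | ⟨j, hj, hm, hn⟩ | ⟨hm, hn⟩)
    · have hg1' : g 1 = some (c 0) := by
        have hF := F 1 (by omega) (by omega)
        simpa using hF
      have h1 := hg_arc 0
      rw [hg0, hg1'] at h1
      rw [hm, hn]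
      exact h1
    · have hgj1 : g (j + 1) = some (c j) := by
        have hF := F (j + 1) (by omega) (by omega)
        have he : j + 1 - 1 = j := by omega
        rw [he] at hF
        exact hF
      have hgj2 : g (j + 2) = some (c (j + 1)) := by
        have hF := F (j + 2) (by omega) (by omega)
        have he : j + 2 - 1 = j + 1 := by omega
        rw [he] at hF
        exact hF
      have h1 := hg_arc (j + 1)
      rw [hgj1] at h1
      have he2 : j + 1 + 1 = j + 2 := by ring
      rw [he2, hgj2] at h1
      rw [hm, hn]
      exact h1
    · have hF := F (p - 1) (by omega) (by omega)
      have h1 := hg_arc (p - 1)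
      have he2 : p - 1 + 1 = p := by omega
      rw [he2, hgp, hF] at h1
      rw [hm, hn]
      exact h1
end
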